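/- Let K > 0, M ≥ 0, let h : [0,∞) → ℝ and φ : [0,∞) → ℝ be continuous with h(t) > 0 and |φ(t)| ≤ M for all t ≥ 0, and let ε : [0,∞) → ℝ be differentiable with ε′(t) = h(t)(−K ε(t) + φ(t)) for all t ≥ 0. Then |ε(t)| ≤ max(|ε(0)|, M/K) for all t ≥ 0; in particular ε is bounded. -/

import Mathlib

/-! Above the level `C ≥ M / K` the drift `-K ε + φ` is negative, so (as `h > 0`) `ε` is strictly
decreasing whenever it exceeds `C`; a fencing argument shows that it never rises above `C` once it
starts below. The lower bound is the same argument for `-ε`, which solves the equation with `-φ`. -/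

open Set

theorem le_of_hasDerivAt_neg_of_gt {f f' : ℝ → ℝ} {a C : ℝ}
    (hf : ∀ t ∈ Ici a, HasDerivAt f (f' t) t) (hneg : ∀ t ∈ Ici a, C < f t → f' t < 0)
    (ha : f a ≤ C) : ∀ t ∈ Ici a, f t ≤ C := by
  intro t ht
  refine le_of_forall_pos_le_add fun δ hδ => ?_
  refine image_le_of_deriv_right_lt_deriv_boundary (B := fun _ => C + δ) (B' := fun _ => 0)
    (fun x hx => (hf x hx.1).continuousAt.continuousWithinAt)
    (fun x hx => (hf x hx.1).hasDerivWithinAt) (by linarith) (fun _ => hasDerivAt_const _ _)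
    (fun x hx hfx => hneg x hx.1 (by linarith)) ⟨ht, le_rfl⟩

theorem le_of_hasDerivAt_damped {h φ ε : ℝ → ℝ} {a K M C : ℝ} (hK : 0 < K)
    (hh : ∀ t ∈ Ici a, 0 < h t) (hφ : ∀ t ∈ Ici a, φ t ≤ M)
    (hε : ∀ t ∈ Ici a, HasDerivAt ε (h t * (-K * ε t + φ t)) t)
    (ha : ε a ≤ C) (hMC : M / K ≤ C) : ∀ t ∈ Ici a, ε t ≤ C := by
  have hMKC : M ≤ K * C := (div_le_iff₀' hK).mp hMC
  refine le_of_hasDerivAt_neg_of_gt hε (fun t ht hCt => mul_neg_of_pos_of_neg (hh t ht) ?_) ha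
  nlinarith [hφ t ht]

theorem scalar_iss_general (K M : ℝ) (hK : 0 < K)
    (h φ : ℝ → ℝ)
    (hhpos : ∀ t : ℝ, 0 ≤ t → 0 < h t)
    (hφM : ∀ t : ℝ, 0 ≤ t → |φ t| ≤ M)
    (ε : ℝ → ℝ)
    (hε : ∀ t : ℝ, 0 ≤ t → HasDerivAt ε (h t * (-K * ε t + φ t)) t) :
    ∀ t : ℝ, 0 ≤ t → |ε t| ≤ max |ε 0| (M / K) := by
  have hMC : M / K ≤ max |ε 0| (M / K) := le_max_right _ _
  have hε0 : |ε 0| ≤ max |ε 0| (M / K) := le_max_left _ _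
  have upper := le_of_hasDerivAt_damped hK hhpos (fun t ht => (abs_le.mp (hφM t ht)).2) hε
    ((le_abs_self _).trans hε0) hMC
  have hnegε : ∀ t ∈ Ici (0 : ℝ), HasDerivAt (-ε) (h t * (-K * (-ε) t + (-φ) t)) t :=
    fun t ht => (hε t ht).neg.congr_deriv (by simp only [Pi.neg_apply]; ring)
  have lower := le_of_hasDerivAt_damped hK hhpos
    (fun t ht => neg_le.mp (abs_le.mp (hφM t ht)).1) hnegε ((neg_le_abs _).trans hε0) hMC
  exact fun t ht => abs_le.mpr ⟨neg_le.mp (lower t ht), upper t ht⟩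

/-- **ISS of the scalar ε-dynamics (proofs of Theorems 2 and 4, Furtat 2019).**
If `ε′(t) = h(t)(−K ε(t) + φ(t))` with `h` continuous and positive, `|φ| ≤ M`, and `K > 0`,
then `|ε(t)| ≤ max(|ε(0)|, M/K)` for all `t ≥ 0`. -/
theorem scalar_iss (K M : ℝ) (hK : 0 < K) (hM : 0 ≤ M)
    (h φ : ℝ → ℝ)
    (hhc : ContinuousOn h (Set.Ici 0))
    (hφc : ContinuousOn φ (Set.Ici 0))
    (hhpos : ∀ t : ℝ, 0 ≤ t → 0 < h t)
    (hφM : ∀ t : ℝ, 0 ≤ t → |φ t| ≤ M)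
    (ε : ℝ → ℝ)
    (hε : ∀ t : ℝ, 0 ≤ t → HasDerivAt ε (h t * (-K * ε t + φ t)) t) :
    ∀ t : ℝ, 0 ≤ t → |ε t| ≤ max |ε 0| (M / K) :=
  scalar_iss_general K M hK h φ hhpos hφM ε hε
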